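/- For 0 < z < 1, the double polylogarithm satisfies Li_{2,1}(1−z) = 2 Li_3(z) − (log z)·Li_2(z) − ζ(2)·log z − 2ζ(3). -/

import Mathlib

open Real

/-- The polylogarithm `Li_k(z) = ∑_{m ≥ 1} z^m/m^k`. -/
noncomputable def Li (k : ℕ) (z : ℝ) : ℝ := ∑' m : ℕ, z ^ (m + 1) / ((m : ℝ) + 1) ^ k

/-- The double polylogarithm `Li_{2,1}(z) = ∑_{1 ≤ m < n} z^n/(m² n)`,
parametrized by `m = a+1`, `n = a+b+2`. -/
noncomputable def Li21 (z : ℝ) : ℝ :=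
  ∑' p : ℕ × ℕ,
    z ^ (p.1 + p.2 + 2) / (((p.1 : ℝ) + 1) ^ 2 * ((p.1 : ℝ) + (p.2 : ℝ) + 2))

/-- `ζ(3) = ∑_{m ≥ 1} 1/m³`. -/
noncomputable def zeta3 : ℝ := ∑' m : ℕ, 1 / ((m : ℝ) + 1) ^ 3

/-!
Both sides vanish at `z = 1` (`Li_{2,1}(0) = 0`, `Li_3(1) = ζ(3)`, `log 1 = 0`), so it suffices to
compare derivatives on `(0, 1)`. From `z Li_{k+1}'(z) = Li_k(z)`, `Li_1(z) = -log(1 - z)` and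
`Li_{2,1}'(x) = Li_2(x)/(1 - x)`, the derivative of the difference of the two sides is
`-(Li_2(z) + Li_2(1 - z) + log z log(1 - z) - ζ(2))/z`, which vanishes by Euler's reflection
formula. That formula is proved the same way: its left side has derivative zero on `(0, 1)` and is
continuous at `1`, because `log s = O(s - 1)` and `u log u → 0`.
-/

open Set Filter Topology Asymptotics

lemma norm_pow_div_le_pow {y r d : ℝ} (hy : |y| ≤ r) (hd : 1 ≤ d) (n : ℕ) :
    ‖y ^ n / d‖ ≤ r ^ n := by
  rw [norm_div, norm_pow, Real.norm_eq_abs, Real.norm_of_nonneg (by linarith)]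
  calc |y| ^ n / d ≤ |y| ^ n := div_le_self (by positivity) hd
    _ ≤ r ^ n := pow_le_pow_left₀ (abs_nonneg y) hy n

lemma summable_pow_add_add {r : ℝ} (h0 : 0 ≤ r) (h1 : r < 1) (j : ℕ) :
    Summable fun p : ℕ × ℕ => r ^ (p.1 + p.2 + j) := by
  have h := summable_geometric_of_lt_one h0 h1
  refine ((h.mul_of_nonneg h (pow_nonneg h0) (pow_nonneg h0)).mul_right (r ^ j)).congr
    fun p => ?_
  simp only [pow_add]

lemma eq_of_hasDerivAt_zero_of_continuousWithinAt {f : ℝ → ℝ} {a b : ℝ} (hab : a ≤ b)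
    (hf : ∀ x ∈ Ico a b, HasDerivAt f 0 x) (hb : ContinuousWithinAt f (Icc a b) b) :
    f a = f b := by
  refine (constant_of_has_deriv_right_zero (fun x hx => ?_)
    (fun x hx => (hf x hx).hasDerivWithinAt) b (right_mem_Icc.2 hab)).symm
  rcases hx.2.eq_or_lt with rfl | hxb
  · exact hb
  · exact (hf x ⟨hx.1, hxb⟩).continuousAt.continuousWithinAt

lemma one_le_natCast_add_one_pow (m k : ℕ) : (1 : ℝ) ≤ ((m : ℝ) + 1) ^ k :=
  one_le_pow₀ (by simp)

lemma summable_Li_terms (k : ℕ) {z : ℝ} (hz : |z| < 1) :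
    Summable fun m : ℕ => z ^ (m + 1) / ((m : ℝ) + 1) ^ k :=
  .of_norm_bounded
    ((summable_nat_add_iff 1).2 (summable_geometric_of_lt_one (abs_nonneg z) hz))
    fun m => norm_pow_div_le_pow le_rfl (one_le_natCast_add_one_pow m k) (m + 1)

lemma Li_apply_zero (k : ℕ) : Li k 0 = 0 := by
  simp [Li]

lemma Li_one_eq_neg_log {z : ℝ} (hz : |z| < 1) : Li 1 z = -log (1 - z) := by
  simp [Li, ← (hasSum_pow_div_log_of_abs_lt_one hz).tsum_eq]

lemma Li_two_one : Li 2 1 = π ^ 2 / 6 := by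
  have h := hasSum_zeta_two.summable.tsum_eq_zero_add
  rw [hasSum_zeta_two.tsum_eq] at h
  simp [Li, h]

lemma Li_three_one : Li 3 1 = zeta3 := by
  simp [Li, zeta3]

lemma continuousOn_Li {k : ℕ} (hk : 2 ≤ k) : ContinuousOn (Li k) (Icc (-1) 1) := by
  have hsum : Summable fun m : ℕ => 1 / ((m : ℝ) + 1) ^ 2 := by
    simpa using (summable_nat_add_iff 1).2 (Real.summable_one_div_nat_pow.2 one_lt_two)
  refine continuousOn_tsum (fun m => (continuousOn_pow _).div_const _) hsum fun m z hz => ?_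
  rw [norm_div, norm_pow, Real.norm_eq_abs, Real.norm_of_nonneg (by positivity)]
  have hz1 : |z| ^ (m + 1) ≤ 1 := pow_le_one₀ (abs_nonneg z) (abs_le.2 hz)
  calc |z| ^ (m + 1) / ((m : ℝ) + 1) ^ k ≤ 1 / ((m : ℝ) + 1) ^ k := by gcongr
    _ ≤ 1 / ((m : ℝ) + 1) ^ 2 := by gcongr; simp

lemma hasDerivAt_Li_succ_tsum (k : ℕ) {z : ℝ} (hz : |z| < 1) :
    HasDerivAt (Li (k + 1)) (∑' m : ℕ, z ^ m / ((m : ℝ) + 1) ^ k) z := by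
  obtain ⟨r, hzr, hr1⟩ := exists_between hz
  have hz_mem : z ∈ Metric.ball (0 : ℝ) r := by simpa using hzr
  show HasDerivAt (fun y => ∑' m : ℕ, y ^ (m + 1) / ((m : ℝ) + 1) ^ (k + 1)) _ z
  refine hasDerivAt_tsum_of_isPreconnected
    (g' := fun (m : ℕ) (y : ℝ) => y ^ m / ((m : ℝ) + 1) ^ k)
    (summable_geometric_of_lt_one ((abs_nonneg z).trans hzr.le) hr1) Metric.isOpen_ball
    (convex_ball 0 r).isPreconnected (fun m y _ => ?_) (fun m y hy => ?_) hz_mem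
    (summable_Li_terms (k + 1) hz) hz_mem
  · have hm : (m : ℝ) + 1 ≠ 0 := by positivity
    refine ((hasDerivAt_pow (m + 1) y).div_const _).congr_deriv ?_
    push_cast
    field_simp
    ring
  · exact norm_pow_div_le_pow (by simpa using (mem_ball_zero_iff.1 hy).le)
      (one_le_natCast_add_one_pow m k) m

lemma hasDerivAt_Li (k : ℕ) {z : ℝ} (hz : |z| < 1) (hz0 : z ≠ 0) :
    HasDerivAt (Li (k + 1)) (Li k z / z) z := by
  convert hasDerivAt_Li_succ_tsum k hz using 1
  rw [Li, div_eq_iff hz0, ← tsum_mul_right]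
  congr 1 with m
  ring

lemma summable_Li21_terms {x : ℝ} (hx : |x| < 1) :
    Summable fun p : ℕ × ℕ =>
      x ^ (p.1 + p.2 + 2) / (((p.1 : ℝ) + 1) ^ 2 * ((p.1 : ℝ) + (p.2 : ℝ) + 2)) :=
  .of_norm_bounded (summable_pow_add_add (abs_nonneg x) hx 2) fun p =>
    norm_pow_div_le_pow le_rfl
      (one_le_mul_of_one_le_of_one_le (one_le_natCast_add_one_pow p.1 2)
        (by linarith [p.1.cast_nonneg (α := ℝ), p.2.cast_nonneg (α := ℝ)])) _

lemma hasDerivAt_Li21_tsum {x : ℝ} (hx : |x| < 1) :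
    HasDerivAt Li21 (∑' p : ℕ × ℕ, x ^ (p.1 + p.2 + 1) / ((p.1 : ℝ) + 1) ^ 2) x := by
  obtain ⟨r, hxr, hr1⟩ := exists_between hx
  have hx_mem : x ∈ Metric.ball (0 : ℝ) r := by simpa using hxr
  show HasDerivAt (fun y => ∑' p : ℕ × ℕ,
    y ^ (p.1 + p.2 + 2) / (((p.1 : ℝ) + 1) ^ 2 * ((p.1 : ℝ) + (p.2 : ℝ) + 2))) _ x
  refine hasDerivAt_tsum_of_isPreconnected
    (g' := fun (p : ℕ × ℕ) (y : ℝ) => y ^ (p.1 + p.2 + 1) / ((p.1 : ℝ) + 1) ^ 2)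
    (summable_pow_add_add ((abs_nonneg x).trans hxr.le) hr1 1) Metric.isOpen_ball
    (convex_ball 0 r).isPreconnected (fun p y _ => ?_) (fun p y hy => ?_) hx_mem
    (summable_Li21_terms hx) hx_mem
  · have hm : (p.1 : ℝ) + 1 ≠ 0 := by positivity
    have hn : (p.1 : ℝ) + (p.2 : ℝ) + 2 ≠ 0 := by positivity
    refine ((hasDerivAt_pow (p.1 + p.2 + 2) y).div_const _).congr_deriv ?_
    push_cast
    field_simp
  · exact norm_pow_div_le_pow (by simpa using (mem_ball_zero_iff.1 hy).le)
      (one_le_natCast_add_one_pow p.1 2) _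

lemma tsum_prod_pow_div_sq_eq_Li_two_div_one_sub {x : ℝ} (hx : |x| < 1) :
    ∑' p : ℕ × ℕ, x ^ (p.1 + p.2 + 1) / ((p.1 : ℝ) + 1) ^ 2 = Li 2 x / (1 - x) := by
  have hLi := summable_norm_iff.2 (summable_Li_terms 2 hx)
  have hgeom := summable_norm_iff.2 (summable_geometric_of_abs_lt_one hx)
  rw [Li, div_eq_mul_inv, ← tsum_geometric_of_abs_lt_one hx,
    tsum_mul_tsum_of_summable_norm hLi hgeom]
  congr 1 with p
  rw [div_mul_eq_mul_div, ← pow_add, add_right_comm]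

lemma hasDerivAt_Li21 {x : ℝ} (hx : |x| < 1) : HasDerivAt Li21 (Li 2 x / (1 - x)) x :=
  tsum_prod_pow_div_sq_eq_Li_two_div_one_sub hx ▸ hasDerivAt_Li21_tsum hx

lemma Li21_zero : Li21 0 = 0 := by
  simp [Li21]

lemma hasDerivAt_Li21_one_sub {s : ℝ} (h0 : 0 < s) (h1 : s < 1) :
    HasDerivAt (fun s => Li21 (1 - s)) (-(Li 2 (1 - s) / s)) s := by
  have h := (hasDerivAt_Li21 (abs_lt.2 ⟨by linarith, by linarith⟩ : |1 - s| < 1)).comp s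
    ((hasDerivAt_id' s).const_sub 1)
  rwa [sub_sub_cancel, mul_neg_one] at h

lemma continuousAt_Li21_one_sub_one : ContinuousAt (fun s => Li21 (1 - s)) 1 :=
  (hasDerivAt_Li21 (x := 1 - 1) (by simp)).continuousAt.comp
    (continuous_const.sub continuous_id).continuousAt

lemma continuousAt_log_mul_log_one_sub : ContinuousAt (fun s => log s * log (1 - s)) 1 := by
  have hlog : (fun s => log s) =O[𝓝 1] (fun s => s - 1) := by
    simpa using (hasDerivAt_log one_ne_zero).isBigO_sub
  have hmul_log : Tendsto (fun s => (s - 1) * log (1 - s)) (𝓝 1) (𝓝 0) := by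
    have := ((continuous_const.sub continuous_id).mul_log (f := fun s : ℝ => 1 - s)).tendsto 1
    convert this.neg using 2
    · ring
    · simp
  simpa [ContinuousAt] using (hlog.mul (isBigO_refl _ _)).trans_tendsto hmul_log

lemma continuousWithinAt_Li_one {k : ℕ} (hk : 2 ≤ k) {a : ℝ} (ha : -1 ≤ a) :
    ContinuousWithinAt (Li k) (Icc a 1) 1 :=
  (continuousOn_Li hk 1 ⟨by norm_num, le_rfl⟩).mono (Icc_subset_Icc ha le_rfl)

lemma continuousAt_Li_one_sub_one {k : ℕ} (hk : 2 ≤ k) :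
    ContinuousAt (fun s => Li k (1 - s)) 1 := by
  have h0 : ContinuousAt (Li k) (1 - 1) :=
    (continuousOn_Li hk).continuousAt (Icc_mem_nhds (by norm_num) (by norm_num))
  exact h0.comp (continuous_const.sub continuous_id).continuousAt

lemma Li_two_add_Li_two_one_sub {z : ℝ} (h0 : 0 < z) (h1 : z < 1) :
    Li 2 z + Li 2 (1 - z) + log z * log (1 - z) = π ^ 2 / 6 := by
  set G : ℝ → ℝ := fun s => Li 2 s + Li 2 (1 - s) + log s * log (1 - s)
  have hderiv : ∀ s ∈ Ico z 1, HasDerivAt G 0 s := by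
    rintro s ⟨hzs, hs1⟩
    have hs0 : 0 < s := h0.trans_le hzs
    have hs : |s| < 1 := abs_lt.2 ⟨by linarith, hs1⟩
    have hs' : |1 - s| < 1 := abs_lt.2 ⟨by linarith, by linarith⟩
    have h1s : 1 - s ≠ 0 := sub_ne_zero.2 hs1.ne'
    have hsub := (hasDerivAt_id' s).const_sub 1
    have hLi := hasDerivAt_Li 1 hs hs0.ne'
    have hLi' := (hasDerivAt_Li 1 hs' h1s).comp s hsub
    have hlog := (hasDerivAt_log hs0.ne').mul ((hasDerivAt_log h1s).comp s hsub)
    refine ((hLi.add hLi').add hlog).congr_deriv ?_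
    rw [Function.comp_apply, Li_one_eq_neg_log hs, Li_one_eq_neg_log hs', sub_sub_cancel]
    ring
  have hcont : ContinuousWithinAt G (Icc z 1) 1 :=
    ((continuousWithinAt_Li_one le_rfl (by linarith)).add
      (continuousAt_Li_one_sub_one le_rfl).continuousWithinAt).add
      continuousAt_log_mul_log_one_sub.continuousWithinAt
  simpa [G, Li_two_one, Li_apply_zero] using
    eq_of_hasDerivAt_zero_of_continuousWithinAt h1.le hderiv hcont

theorem stmt8 (z : ℝ) (h0 : 0 < z) (h1 : z < 1) :
    Li21 (1 - z) =
      2 * Li 3 z - Real.log z * Li 2 z - (π ^ 2 / 6) * Real.log z - 2 * zeta3 := by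
  set F : ℝ → ℝ := fun s => Li21 (1 - s) -
    (2 * Li 3 s - log s * Li 2 s - (π ^ 2 / 6) * log s - 2 * zeta3)
  have hderiv : ∀ s ∈ Ico z 1, HasDerivAt F 0 s := by
    rintro s ⟨hzs, hs1⟩
    have hs0 : 0 < s := h0.trans_le hzs
    have hs : |s| < 1 := abs_lt.2 ⟨by linarith, hs1⟩
    have hlog := hasDerivAt_log hs0.ne'
    have hrhs := ((((hasDerivAt_Li 2 hs hs0.ne').const_mul 2).sub
      (hlog.mul (hasDerivAt_Li 1 hs hs0.ne'))).sub (hlog.const_mul (π ^ 2 / 6))).sub_const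
      (2 * zeta3)
    refine ((hasDerivAt_Li21_one_sub hs0 hs1).sub hrhs).congr_deriv ?_
    rw [Li_one_eq_neg_log hs, ← Li_two_add_Li_two_one_sub hs0 hs1]
    ring
  have hcont : ContinuousWithinAt F (Icc z 1) 1 := by
    have hLi2 := continuousWithinAt_Li_one (k := 2) le_rfl (a := z) (by linarith)
    have hLi3 := continuousWithinAt_Li_one (k := 3) (by norm_num) (a := z) (by linarith)
    have hlog := (continuousAt_log one_ne_zero).continuousWithinAt (s := Icc z 1)
    exact continuousAt_Li21_one_sub_one.continuousWithinAt.sub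
      ((((continuousWithinAt_const.mul hLi3).sub (hlog.mul hLi2)).sub
        (continuousWithinAt_const.mul hlog)).sub continuousWithinAt_const)
  have hF1 : F 1 = 0 := by simp [F, Li21_zero, Li_three_one]
  exact sub_eq_zero.1 ((eq_of_hasDerivAt_zero_of_continuousWithinAt h1.le hderiv hcont).trans hF1)
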